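/- arXiv:2305.03795 — 5 statements merged into one kernel-verified Lean document; each statement's English description precedes it below -/
import Mathlib

section
/- Let K ≥ 2 and let X_1, ..., X_K be a RECIPE encoding process of length K satisfying the uniformity condition, with q_i(d) denoting the common probability P(X_i = S) over all d-element nonempty subsets S ⊆ {1,...,i}. Then for every i with 2 ≤ i ≤ K and every d with 1 ≤ d ≤ i−1, it holds that q_{i−1}(d) ≥ q_i(d) + q_i(d+1). -/
/-!
A set `S ⊆ {1,…,i-1}` with `|S| = d` is reached at time `i` only by skipping from `X (i-1) = S`,
and `S ∪ {i}` only by adding `i` to `X (i-1) = S` (`S ∪ {i} ≠ {i}` as `S` is nonempty). So the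
disjoint events `X i = S` and `X i = S ∪ {i}` both lie almost surely inside `X (i-1) = S`.
-/

open MeasureTheory Finset

theorem eq_of_recipe_step {α : Type*} [DecidableEq α] {i : α} {S T U : Finset α}
    (hS : S.Nonempty) (hiS : i ∉ S) (hiT : i ∉ T)
    (hstep : U = T ∨ U = insert i T ∨ U = {i}) (hU : U = S ∨ U = insert i S) : T = S := by
  obtain ⟨x, hx⟩ := hS
  rcases hstep with rfl | rfl | rfl <;> rcases hU with h | h
  · exact h
  · exact absurd (h ▸ mem_insert_self i S) hiT
  · exact absurd (h ▸ mem_insert_self i T) hiS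
  · simpa [erase_insert hiT, erase_insert hiS] using congrArg (·.erase i) h
  · exact absurd (h ▸ mem_singleton_self i) hiS
  · have hxi : x = i := mem_singleton.mp (h ▸ mem_insert_of_mem hx)
    exact absurd (hxi ▸ hx) hiS

theorem recipe_step_union_ae_le {Ω α : Type*} [MeasurableSpace Ω] [DecidableEq α]
    {μ : Measure Ω} {Xprev Xnext : Ω → Finset α} {i : α}
    (hprev : ∀ᵐ ω ∂μ, i ∉ Xprev ω)
    (hstep : ∀ᵐ ω ∂μ, Xnext ω = Xprev ω ∨ Xnext ω = insert i (Xprev ω) ∨ Xnext ω = {i})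
    {S : Finset α} (hS : S.Nonempty) (hiS : i ∉ S) :
    ({ω | Xnext ω = S} ∪ {ω | Xnext ω = insert i S} : Set Ω) ≤ᵐ[μ] {ω | Xprev ω = S} := by
  filter_upwards [hprev, hstep] with ω hiT hstepω hU
  exact eq_of_recipe_step hS hiS hiT hstepω hU

theorem measureReal_add_le_of_union_ae_le {Ω : Type*} [MeasurableSpace Ω] {μ : Measure Ω}
    [IsFiniteMeasure μ] {A B C : Set Ω} (hd : Disjoint A B) (hB : MeasurableSet B)
    (h : (A ∪ B : Set Ω) ≤ᵐ[μ] C) : μ.real A + μ.real B ≤ μ.real C := by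
  rw [← measureReal_union hd hB]
  exact ENNReal.toReal_mono (measure_ne_top μ C) (measure_mono_ae h)

theorem recipe_feasibility_necessary_general
    {Ω : Type*} [MeasurableSpace Ω] (μ : Measure Ω) [IsProbabilityMeasure μ]
    (K : ℕ)
    (X : ℕ → Ω → Finset ℕ)
    (hXmeas : ∀ i S, MeasurableSet {ω | X i ω = S})
    (hXsub : ∀ i, 1 ≤ i → i ≤ K →
      ∀ᵐ ω ∂μ, (X i ω).Nonempty ∧ X i ω ⊆ Finset.Icc 1 i)
    (hXstep : ∀ i, 2 ≤ i → i ≤ K →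
      ∀ᵐ ω ∂μ, X i ω = X (i - 1) ω ∨ X i ω = insert i (X (i - 1) ω) ∨
        X i ω = ({i} : Finset ℕ))
    (q : ℕ → ℕ → ℝ)
    (hunif : ∀ i, 1 ≤ i → i ≤ K → ∀ S : Finset ℕ, S.Nonempty → S ⊆ Finset.Icc 1 i →
      (μ {ω | X i ω = S}).toReal = q i S.card) :
    ∀ i d, 2 ≤ i → i ≤ K → 1 ≤ d → d ≤ i - 1 →
      q (i - 1) d ≥ q i d + q i (d + 1) := by
  intro i d h2i hiK h1d hdi
  set S := Icc 1 d
  have hSne : S.Nonempty := nonempty_Icc.mpr h1d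
  have hiS : i ∉ S := by simp only [S, mem_Icc]; omega
  have hprev : ∀ᵐ ω ∂μ, i ∉ X (i - 1) ω := by
    filter_upwards [hXsub (i - 1) (by omega) (by omega)] with ω hsub hi
    have := mem_Icc.mp (hsub.2 hi)
    omega
  have hdisj : Disjoint {ω | X i ω = S} {ω | X i ω = insert i S} :=
    Set.disjoint_left.mpr fun ω hA hB => hiS ((hA.symm.trans hB) ▸ mem_insert_self i S)
  have key := measureReal_add_le_of_union_ae_le hdisj (hXmeas i _)
    (recipe_step_union_ae_le hprev (hXstep i h2i hiK) hSne hiS)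
  simp only [measureReal_def] at key
  rwa [hunif i (by omega) hiK S hSne (Icc_subset_Icc_right (by omega)),
    hunif i (by omega) hiK (insert i S) (insert_nonempty i S)
      (insert_subset (mem_Icc.mpr (by omega)) (Icc_subset_Icc_right (by omega))),
    hunif (i - 1) (by omega) (by omega) S hSne (Icc_subset_Icc_right hdi),
    card_insert_of_notMem hiS, Nat.card_Icc, Nat.add_sub_cancel] at key

/-- Necessity of the RECIPE-feasibility inequalities: for a RECIPE
encoding process `X 1, …, X K` (values in nonempty subsets of `{1,…,K}`, starting from
`{1}`, each step being Skip, Add, or Replace) satisfying the uniformity condition with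
per-subset probabilities `q i d`, one has `q (i-1) d ≥ q i d + q i (d+1)` for all
`2 ≤ i ≤ K` and `1 ≤ d ≤ i-1`. -/
theorem recipe_feasibility_necessary
    {Ω : Type*} [MeasurableSpace Ω] (μ : Measure Ω) [IsProbabilityMeasure μ]
    (K : ℕ) (hK : 2 ≤ K)
    (X : ℕ → Ω → Finset ℕ)
    (hXmeas : ∀ i S, MeasurableSet {ω | X i ω = S})
    (hX1 : ∀ᵐ ω ∂μ, X 1 ω = ({1} : Finset ℕ))
    (hXsub : ∀ i, 1 ≤ i → i ≤ K →
      ∀ᵐ ω ∂μ, (X i ω).Nonempty ∧ X i ω ⊆ Finset.Icc 1 i)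
    (hXstep : ∀ i, 2 ≤ i → i ≤ K →
      ∀ᵐ ω ∂μ, X i ω = X (i - 1) ω ∨ X i ω = insert i (X (i - 1) ω) ∨
        X i ω = ({i} : Finset ℕ))
    (q : ℕ → ℕ → ℝ)
    (hunif : ∀ i, 1 ≤ i → i ≤ K → ∀ S : Finset ℕ, S.Nonempty → S ⊆ Finset.Icc 1 i →
      (μ {ω | X i ω = S}).toReal = q i S.card) :
    ∀ i d, 2 ≤ i → i ≤ K → 1 ≤ d → d ≤ i - 1 →
      q (i - 1) d ≥ q i d + q i (d + 1) :=
  recipe_feasibility_necessary_general μ K X hXmeas hXsub hXstep q hunif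
end

section
/- Let K ≥ 1 and let q_i(d), for 1 ≤ i ≤ K and 1 ≤ d ≤ i, be nonnegative reals with q_1(1) = 1, with Σ_{d=1}^{i} C(i,d)·q_i(d) = 1 for every i, and satisfying q_{i−1}(d) ≥ q_i(d) + q_i(d+1) for all 2 ≤ i ≤ K and 1 ≤ d ≤ i−1. Then there exist probability mass functions ν_1, ..., ν_K on the finite subsets of {1,...,K} and, for each 2 ≤ i ≤ K, a Markov kernel κ_i assigning to each nonempty subset S' ⊆ {1,...,i−1} a probability mass function supported on the three subsets {S', S' ∪ {i}, {i}}, such that: ν_1 is the point mass at {1}; ν_i is obtained by applying κ_i to ν_{i−1} (i.e., ν_i(S) = Σ_{S'} ν_{i−1}(S')·κ_i(S')(S)); and for every 1 ≤ i ≤ K and every nonempty S ⊆ {1,...,i}, ν_i(S) = q_i(|S|). -/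
/-!
Take `ν i` to be the law the theorem asks for: `ν i S = q i |S|` on the nonempty
`S ⊆ {1,…,i}`. From a state `T` with `|T| = d` the kernel to hop `i` keeps `T` with probability
`q i d / q (i-1) d`, moves to `T ∪ {i}` with probability `q i (d+1) / q (i-1) d`, and restarts at
`{i}` with the remaining probability, which is nonnegative by the RECIPE-feasibility inequality.
Every target other than `{i}` has a unique predecessor, which carries exactly the mass `q i |S|`;
for `{i}`, Pascal's rule turns the normalisation of `q (i-1)` and `q i` into
`∑ d, C(i-1,d) (q (i-1) d - q i d - q i (d+1)) = q i 1`.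
-/

open Finset

lemma sum_range_succ_eq_add_sum_Icc {M : Type*} [AddCommMonoid M] (f : ℕ → M) (n : ℕ) :
    ∑ d ∈ range (n + 1), f d = f 0 + ∑ d ∈ Icc 1 n, f d := by
  rw [range_eq_Ico, sum_eq_sum_Ico_succ_bot n.succ_pos]
  rfl

lemma sum_powerset_Icc_ite_nonempty {M : Type*} [AddCommMonoid M] (f : ℕ → M) (n : ℕ) :
    ∑ S ∈ (Icc 1 n).powerset, (if S.Nonempty then f #S else 0) =
      ∑ d ∈ Icc 1 n, n.choose d • f d := by
  let g : ℕ → M := fun m => if m = 0 then 0 else f m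
  have hcard : ∀ S : Finset ℕ, (if S.Nonempty then f #S else 0) = g #S := by
    intro S
    simp only [g, card_eq_zero, ← not_nonempty_iff_eq_empty, ite_not]
  rw [sum_congr rfl fun S _ => hcard S, sum_powerset_apply_card g, Nat.card_Icc,
    Nat.add_sub_cancel, sum_range_succ_eq_add_sum_Icc]
  simp only [g, if_pos rfl, smul_zero, zero_add]
  refine sum_congr rfl fun d hd => ?_
  rw [if_neg (by simp at hd; omega)]

lemma sum_choose_mul_add_succ {R : Type*} [CommRing R] (r : ℕ → R) (n : ℕ) :
    ∑ d ∈ Icc 1 n, (n.choose d : R) * (r d + r (d + 1)) =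
      ∑ d ∈ Icc 1 (n + 1), ((n + 1).choose d : R) * r d - r 1 := by
  have pascal := sum_choose_succ_mul (fun i _ => r i) n
  simp only [sum_range_succ_eq_add_sum_Icc, Nat.choose_zero_right, Nat.cast_one, one_mul,
    zero_add] at pascal
  simp only [mul_add, sum_add_distrib]
  linear_combination -pascal

lemma mul_div_of_nonneg_of_le {a b : ℝ} (hb : 0 ≤ b) (hba : b ≤ a) : a * (b / a) = b :=
  mul_div_cancel_of_imp' fun ha => le_antisymm (ha ▸ hba) hb

lemma one_sub_div_sub_div_nonneg {a b c : ℝ} (h : b + c ≤ a) (hbc : 0 ≤ b + c) :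
    0 ≤ 1 - b / a - c / a := by
  have := div_le_one_of_le₀ h (hbc.trans h)
  rw [add_div] at this
  linarith

-- Zero for `i > K` as well, so that every `ν i` lives on the subsets of `{1,…,K}`.
noncomputable def xddMass (K : ℕ) (q : ℕ → ℕ → ℝ) (i : ℕ) (S : Finset ℕ) : ℝ :=
  if i ≤ K ∧ S.Nonempty ∧ S ⊆ Icc 1 i then q i #S else 0

def RecipeFeasibleAt (q : ℕ → ℕ → ℝ) (j d : ℕ) : Prop :=
  0 ≤ q (j + 1) d ∧ 0 ≤ q (j + 1) (d + 1) ∧ q (j + 1) d + q (j + 1) (d + 1) ≤ q j d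

noncomputable def stayProb (q : ℕ → ℕ → ℝ) (j d : ℕ) : ℝ :=
  q (j + 1) d / q j d

noncomputable def growProb (q : ℕ → ℕ → ℝ) (j d : ℕ) : ℝ :=
  q (j + 1) (d + 1) / q j d

noncomputable def restartProb (q : ℕ → ℕ → ℝ) (j d : ℕ) : ℝ :=
  1 - stayProb q j d - growProb q j d

/-- The kernel from hop `j` to hop `j + 1`. If `q j |T| = 0` then `T` is never reached, and the
junk value `x / 0 = 0` makes the kernel restart from `T` with probability one. -/
noncomputable def recipeKernel (q : ℕ → ℕ → ℝ) (j : ℕ) (T S : Finset ℕ) : ℝ :=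
  (if S = T then stayProb q j #T else 0) +
    (if S = insert (j + 1) T then growProb q j #T else 0) +
    (if S = {j + 1} then restartProb q j #T else 0)

section Weights

variable {q : ℕ → ℕ → ℝ} {j d : ℕ}

lemma RecipeFeasibleAt.stay_le (h : RecipeFeasibleAt q j d) : q (j + 1) d ≤ q j d := by
  obtain ⟨-, hgrow, hle⟩ := h
  linarith

lemma RecipeFeasibleAt.grow_le (h : RecipeFeasibleAt q j d) : q (j + 1) (d + 1) ≤ q j d := by
  obtain ⟨hstay, -, hle⟩ := h
  linarith

lemma stayProb_nonneg (h : RecipeFeasibleAt q j d) : 0 ≤ stayProb q j d :=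
  div_nonneg h.1 (h.1.trans h.stay_le)

lemma growProb_nonneg (h : RecipeFeasibleAt q j d) : 0 ≤ growProb q j d :=
  div_nonneg h.2.1 (h.2.1.trans h.grow_le)

lemma restartProb_nonneg (h : RecipeFeasibleAt q j d) : 0 ≤ restartProb q j d :=
  one_sub_div_sub_div_nonneg h.2.2 (add_nonneg h.1 h.2.1)

lemma mul_stayProb (h : RecipeFeasibleAt q j d) : q j d * stayProb q j d = q (j + 1) d :=
  mul_div_of_nonneg_of_le h.1 h.stay_le

lemma mul_growProb (h : RecipeFeasibleAt q j d) :
    q j d * growProb q j d = q (j + 1) (d + 1) :=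
  mul_div_of_nonneg_of_le h.2.1 h.grow_le

lemma mul_restartProb (h : RecipeFeasibleAt q j d) :
    q j d * restartProb q j d = q j d - (q (j + 1) d + q (j + 1) (d + 1)) := by
  rw [restartProb, mul_sub, mul_sub, mul_one, mul_stayProb h, mul_growProb h, sub_sub]

end Weights

section XddMass

variable {K : ℕ} {q : ℕ → ℕ → ℝ} {i j : ℕ} {S : Finset ℕ}

lemma card_mem_Icc_of_subset_Icc {n : ℕ} (hS : S.Nonempty) (hSn : S ⊆ Icc 1 n) :
    #S ∈ Icc 1 n :=
  mem_Icc.2 ⟨hS.card_pos, by simpa using card_le_card hSn⟩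

lemma xddMass_of_subset (hi : i ≤ K) (hS : S.Nonempty) (hSi : S ⊆ Icc 1 i) :
    xddMass K q i S = q i #S :=
  if_pos ⟨hi, hS, hSi⟩

lemma xddMass_eq_zero (h : ¬(S.Nonempty ∧ S ⊆ Icc 1 i)) : xddMass K q i S = 0 :=
  if_neg fun h' => h h'.2

lemma xddMass_nonneg
    (hq : ∀ i d, 1 ≤ i → i ≤ K → 1 ≤ d → d ≤ i → 0 ≤ q i d) (i : ℕ) (S : Finset ℕ) :
    0 ≤ xddMass K q i S := by
  unfold xddMass
  split_ifs with h
  · obtain ⟨hi, hS, hSi⟩ := h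
    obtain ⟨hd1, hdi⟩ := mem_Icc.1 (card_mem_Icc_of_subset_Icc hS hSi)
    exact hq i #S (hd1.trans hdi) hi hd1 hdi
  · exact le_rfl

lemma subset_Icc_of_xddMass_ne_zero (h : xddMass K q i S ≠ 0) : S ⊆ Icc 1 K := by
  unfold xddMass at h
  split_ifs at h with hS
  · exact hS.2.2.trans (Icc_subset_Icc_right hS.1)
  · exact absurd rfl h

lemma xddMass_one (hK : 1 ≤ K) (hq1 : q 1 1 = 1) (S : Finset ℕ) :
    xddMass K q 1 S = if S = {1} then 1 else 0 := by
  split_ifs with hS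
  · rw [hS, xddMass_of_subset hK (singleton_nonempty 1) (by simp), card_singleton, hq1]
  · refine xddMass_eq_zero fun ⟨hne, hsub⟩ => hS ?_
    rw [Icc_self] at hsub
    exact (subset_singleton_iff.1 hsub).resolve_left hne.ne_empty

lemma sum_xddMass_mul (hi : i ≤ K) (f : ℕ → ℝ) :
    ∑ S ∈ (Icc 1 K).powerset, xddMass K q i S * f #S =
      ∑ d ∈ Icc 1 i, (i.choose d : ℝ) * (q i d * f d) := by
  rw [← sum_subset (powerset_mono.2 (Icc_subset_Icc_right hi)) fun S _ hS => ?_]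
  · simp_rw [← nsmul_eq_mul, ← sum_powerset_Icc_ite_nonempty]
    refine sum_congr rfl fun S hS => ?_
    rw [mem_powerset] at hS
    by_cases hne : S.Nonempty
    · rw [xddMass_of_subset hi hne hS, if_pos hne]
    · rw [xddMass_eq_zero fun h => hne h.1, if_neg hne, zero_mul]
  · rw [xddMass_eq_zero fun h => hS (mem_powerset.2 h.2), zero_mul]

lemma sum_xddMass (hi : i ≤ K) (hsum : ∑ d ∈ Icc 1 i, (i.choose d : ℝ) * q i d = 1) :
    ∑ S ∈ (Icc 1 K).powerset, xddMass K q i S = 1 := by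
  simpa [hsum] using sum_xddMass_mul (q := q) hi fun _ => 1

end XddMass

section RecipeKernel

variable {q : ℕ → ℕ → ℝ} {j : ℕ} {T : Finset ℕ}

lemma recipeKernel_nonneg (h : RecipeFeasibleAt q j #T) (S : Finset ℕ) :
    0 ≤ recipeKernel q j T S :=
  add_nonneg (add_nonneg (ite_nonneg (stayProb_nonneg h) le_rfl)
    (ite_nonneg (growProb_nonneg h) le_rfl)) (ite_nonneg (restartProb_nonneg h) le_rfl)

lemma eq_or_eq_of_recipeKernel_ne_zero {S : Finset ℕ} (h : recipeKernel q j T S ≠ 0) :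
    S = T ∨ S = insert (j + 1) T ∨ S = {j + 1} := by
  by_contra! hS
  simp [recipeKernel, hS.1, hS.2.1, hS.2.2] at h

lemma sum_recipeKernel {U : Finset (Finset ℕ)} (hT : T ∈ U) (hgrow : insert (j + 1) T ∈ U)
    (hrestart : {j + 1} ∈ U) : ∑ S ∈ U, recipeKernel q j T S = 1 := by
  simp only [recipeKernel, restartProb, sum_add_distrib, sum_ite_eq', hT, hgrow, hrestart,
    if_true]
  ring

end RecipeKernel

lemma sum_mul_ite_eq_insert {α R : Type*} [DecidableEq α] [NonUnitalNonAssocSemiring R]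
    {ν w : Finset α → R} {U : Finset (Finset α)} {a : α} {S : Finset α}
    (hν : ∀ T, a ∈ T → ν T = 0) (hS : S.erase a ∈ U) :
    ∑ T ∈ U, ν T * (if S = insert a T then w T else 0) =
      if a ∈ S then ν (S.erase a) * w (S.erase a) else 0 := by
  rw [sum_eq_single_of_mem _ hS fun T _ hT => ?_]
  · by_cases ha : a ∈ S
    · rw [if_pos (insert_erase ha).symm, if_pos ha]
    · rw [if_neg fun (h : S = _) => ha (h ▸ mem_insert_self a _), if_neg ha, mul_zero]
  · by_cases haT : a ∈ T
    · rw [hν T haT, zero_mul]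
    · rw [if_neg fun (h : S = insert a T) => hT (by rw [h, erase_insert haT]), mul_zero]

section Evolution

variable {K : ℕ} {q : ℕ → ℕ → ℝ} {j : ℕ} {S : Finset ℕ}

lemma xddMass_eq_zero_of_mem (hS : j + 1 ∈ S) : xddMass K q j S = 0 :=
  xddMass_eq_zero fun h => by simpa using h.2 hS

lemma Icc_one_add_one_eq_insert (j : ℕ) : Icc 1 (j + 1) = insert (j + 1) (Icc 1 j) :=
  (insert_Icc_right_eq_Icc_add_one (by omega)).symm

lemma xddMass_succ_of_notMem (hjK : j + 1 ≤ K) (hfeas : ∀ d ∈ Icc 1 j, RecipeFeasibleAt q j d)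
    (hS : j + 1 ∉ S) :
    xddMass K q (j + 1) S = xddMass K q j S * stayProb q j #S := by
  by_cases hval : S.Nonempty ∧ S ⊆ Icc 1 j
  · obtain ⟨hne, hsub⟩ := hval
    rw [xddMass_of_subset hjK hne (Icc_one_add_one_eq_insert j ▸ hsub.trans (subset_insert _ _)),
      xddMass_of_subset (by omega) hne hsub,
      mul_stayProb (hfeas #S (card_mem_Icc_of_subset_Icc hne hsub))]
  · rw [xddMass_eq_zero hval, zero_mul, xddMass_eq_zero]
    rwa [Icc_one_add_one_eq_insert, subset_insert_iff_of_notMem hS]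

lemma xddMass_succ_of_mem (hjK : j + 1 ≤ K) (hfeas : ∀ d ∈ Icc 1 j, RecipeFeasibleAt q j d)
    (hS : j + 1 ∈ S) (hS1 : S ≠ {j + 1}) :
    xddMass K q (j + 1) S =
      xddMass K q j (S.erase (j + 1)) * growProb q j #(S.erase (j + 1)) := by
  have hne : (S.erase (j + 1)).Nonempty := by
    rw [nonempty_iff_ne_empty, Ne, erase_eq_empty_iff]
    exact fun h => h.elim (fun h => by simp [h] at hS) hS1
  have hsub : S ⊆ Icc 1 (j + 1) ↔ S.erase (j + 1) ⊆ Icc 1 j := by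
    rw [Icc_one_add_one_eq_insert, subset_insert_iff]
  by_cases hval : S.erase (j + 1) ⊆ Icc 1 j
  · rw [xddMass_of_subset hjK ⟨_, hS⟩ (hsub.2 hval), xddMass_of_subset (by omega) hne hval,
      mul_growProb (hfeas _ (card_mem_Icc_of_subset_Icc hne hval)), card_erase_add_one hS]
  · rw [xddMass_eq_zero fun h => hval (hsub.1 h.2), xddMass_eq_zero fun h => hval h.2, zero_mul]

lemma sum_xddMass_mul_restartProb (hjK : j + 1 ≤ K)
    (hfeas : ∀ d ∈ Icc 1 j, RecipeFeasibleAt q j d)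
    (hsum : ∑ d ∈ Icc 1 j, (j.choose d : ℝ) * q j d = 1)
    (hsum' : ∑ d ∈ Icc 1 (j + 1), ((j + 1).choose d : ℝ) * q (j + 1) d = 1) :
    ∑ T ∈ (Icc 1 K).powerset, xddMass K q j T * restartProb q j #T = q (j + 1) 1 := by
  rw [sum_xddMass_mul (by omega),
    sum_congr rfl fun d hd => by rw [mul_restartProb (hfeas d hd)]]
  simp only [mul_sub, sum_sub_distrib, sum_choose_mul_add_succ, hsum, hsum']
  ring

lemma xddMass_succ_eq_sum_mul_recipeKernel (hjK : j + 1 ≤ K)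
    (hfeas : ∀ d ∈ Icc 1 j, RecipeFeasibleAt q j d)
    (hsum : ∑ d ∈ Icc 1 j, (j.choose d : ℝ) * q j d = 1)
    (hsum' : ∑ d ∈ Icc 1 (j + 1), ((j + 1).choose d : ℝ) * q (j + 1) d = 1)
    (hSK : S ⊆ Icc 1 K) :
    xddMass K q (j + 1) S =
      ∑ T ∈ (Icc 1 K).powerset, xddMass K q j T * recipeKernel q j T S := by
  simp only [recipeKernel, mul_add, sum_add_distrib]
  rw [sum_mul_ite_eq_insert (fun T => xddMass_eq_zero_of_mem)
    (mem_powerset.2 ((erase_subset _ _).trans hSK))]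
  simp only [mul_ite, mul_zero, sum_ite_eq, sum_ite_irrel, sum_const_zero, mem_powerset, hSK,
    if_true]
  by_cases hS : j + 1 ∈ S
  · rw [xddMass_eq_zero_of_mem hS, zero_mul, zero_add, if_pos hS]
    by_cases hS1 : S = {j + 1}
    · subst hS1
      rw [erase_singleton, xddMass_eq_zero fun h => not_nonempty_empty h.1, zero_mul, zero_add,
        if_pos rfl, sum_xddMass_mul_restartProb hjK hfeas hsum hsum',
        xddMass_of_subset hjK (singleton_nonempty _) (by simp), card_singleton]
    · rw [if_neg hS1, add_zero, xddMass_succ_of_mem hjK hfeas hS hS1]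
  · rw [if_neg hS, if_neg fun (h : S = {j + 1}) => hS (h ▸ mem_singleton_self _), add_zero,
      add_zero, xddMass_succ_of_notMem hjK hfeas hS]

end Evolution

/-- Sufficiency of the RECIPE-feasibility inequalities: any XDD sequence
`q` satisfying them can be realized by a sequence of pmfs `ν 1, …, ν K` on subsets of
`{1,…,K}` evolving by Markov kernels `κ i` supported, from each nonempty
`S' ⊆ {1,…,i-1}`, on the three subsets `{S', S' ∪ {i}, {i}}`, with
`ν 1 = δ_{{1}}` and `ν i S = q i |S|` for every nonempty `S ⊆ {1,…,i}`. -/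
theorem recipe_feasibility_sufficient
    (K : ℕ) (hK : 1 ≤ K) (q : ℕ → ℕ → ℝ)
    (hq0 : ∀ i d, 1 ≤ i → i ≤ K → 1 ≤ d → d ≤ i → 0 ≤ q i d)
    (hq1 : q 1 1 = 1)
    (hqsum : ∀ i, 1 ≤ i → i ≤ K →
      ∑ d ∈ Finset.Icc 1 i, (i.choose d : ℝ) * q i d = 1)
    (hfeas : ∀ i d, 2 ≤ i → i ≤ K → 1 ≤ d → d ≤ i - 1 →
      q (i - 1) d ≥ q i d + q i (d + 1)) :
    ∃ (ν : ℕ → Finset ℕ → ℝ) (κ : ℕ → Finset ℕ → Finset ℕ → ℝ),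
      -- each ν i is a probability mass function on the subsets of {1,…,K}
      (∀ i S, 0 ≤ ν i S) ∧
      (∀ i, 1 ≤ i → i ≤ K → ∑ S ∈ (Finset.Icc 1 K).powerset, ν i S = 1) ∧
      (∀ i S, ν i S ≠ 0 → S ⊆ Finset.Icc 1 K) ∧
      -- ν 1 is the point mass at {1}
      (∀ S : Finset ℕ, ν 1 S = if S = ({1} : Finset ℕ) then 1 else 0) ∧
      -- κ i is a Markov kernel supported on the three admissible successors
      (∀ i, 2 ≤ i → i ≤ K → ∀ S' : Finset ℕ, S'.Nonempty → S' ⊆ Finset.Icc 1 (i - 1) →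
        (∀ S, 0 ≤ κ i S' S) ∧
        (∀ S, κ i S' S ≠ 0 →
          S = S' ∨ S = insert i S' ∨ S = ({i} : Finset ℕ)) ∧
        (∑ S ∈ (Finset.Icc 1 K).powerset, κ i S' S = 1)) ∧
      -- ν i is obtained by applying κ i to ν (i-1)
      (∀ i, 2 ≤ i → i ≤ K → ∀ S ∈ (Finset.Icc 1 K).powerset,
        ν i S = ∑ S' ∈ (Finset.Icc 1 K).powerset, ν (i - 1) S' * κ i S' S) ∧
      -- the uniformity condition with per-subset probabilities q
      (∀ i, 1 ≤ i → i ≤ K → ∀ S : Finset ℕ, S.Nonempty → S ⊆ Finset.Icc 1 i →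
        ν i S = q i S.card) := by
  have hstep : ∀ j, j + 1 ≤ K → ∀ d ∈ Icc 1 j, RecipeFeasibleAt q j d := by
    intro j hjK d hd
    rw [mem_Icc] at hd
    have hle := hfeas (j + 1) d (by omega) hjK hd.1 (by omega)
    rw [Nat.add_sub_cancel] at hle
    exact ⟨hq0 _ _ (by omega) hjK hd.1 (by omega),
      hq0 _ _ (by omega) hjK (by omega) (by omega), hle⟩
  refine ⟨xddMass K q, fun i => recipeKernel q (i - 1), xddMass_nonneg hq0,
    fun i hi hiK => sum_xddMass hiK (hqsum i hi hiK), fun _ _ => subset_Icc_of_xddMass_ne_zero,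
    xddMass_one hK hq1, fun i hi hiK T hT hTi => ?_, fun i hi hiK S hS => ?_,
    fun _ _ hiK _ hS hSi => xddMass_of_subset hiK hS hSi⟩
  · obtain ⟨j, rfl⟩ : ∃ j, i = j + 1 := ⟨i - 1, by omega⟩
    simp only [Nat.add_sub_cancel] at hTi ⊢
    have hTK : T ⊆ Icc 1 K := hTi.trans (Icc_subset_Icc_right (by omega))
    refine ⟨recipeKernel_nonneg (hstep j hiK _ (card_mem_Icc_of_subset_Icc hT hTi)),
      fun _ => eq_or_eq_of_recipeKernel_ne_zero, sum_recipeKernel (mem_powerset.2 hTK) ?_ ?_⟩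
    · exact mem_powerset.2 (insert_subset (mem_Icc.2 ⟨by omega, hiK⟩) hTK)
    · exact mem_powerset.2 (singleton_subset_iff.2 (mem_Icc.2 ⟨by omega, hiK⟩))
  · obtain ⟨j, rfl⟩ : ∃ j, i = j + 1 := ⟨i - 1, by omega⟩
    simp only [Nat.add_sub_cancel]
    exact xddMass_succ_eq_sum_mul_recipeKernel hiK (hstep j hiK) (hqsum j (by omega) (by omega))
      (hqsum _ (by omega) hiK) (mem_powerset.1 hS)
end

section
/- Fix i ≥ 2 and nonnegative reals q_{i−1}(d) (1 ≤ d ≤ i−1) and q_i(d) (1 ≤ d ≤ i) with Σ_{d=1}^{i−1} C(i−1,d)·q_{i−1}(d) = 1, Σ_{d=1}^{i} C(i,d)·q_i(d) = 1, and q_{i−1}(d) ≥ q_i(d) + q_i(d+1) for all 1 ≤ d ≤ i−1. Define p_A(i,d) = q_i(d+1)/q_{i−1}(d) and p_S(i,d) = q_i(d)/q_{i−1}(d) when q_{i−1}(d) > 0, and p_A(i,d) = p_S(i,d) = 0 otherwise, and set p_R(i,d) = 1 − p_A(i,d) − p_S(i,d). Let ν be a probability mass function on the nonempty subsets of {1,...,i−1}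 with ν(S') = q_{i−1}(|S'|) for every nonempty S' ⊆ {1,...,i−1}, and define ν' on subsets S ⊆ {1,...,i} by: ν'(S) = ν(S)·p_S(i,|S|) if i ∉ S; ν'(S) = ν(S∖{i})·p_A(i,|S|−1) if i ∈ S and S ≠ {i}; and ν'({i}) = Σ_{S'} ν(S')·p_R(i,|S'|). Then ν' is a probability mass function and ν'(S) = q_i(|S|) for every nonempty S ⊆ {1,...,i}. -/
/-!
Skip and Add rescale the mass `qprev d` of each set of size `d` to exactly `qcur d` and
`qcur (d + 1)`; feasibility `qcur d + qcur (d + 1) ≤ qprev d` forces both targets to vanish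
when `qprev d = 0`, so the rescaling is exact there too. Everything left over goes to `{i}`, and
Pascal's rule `C(i, d) = C(i - 1, d) + C(i - 1, d - 1)` shows that this leftover mass is
`1 - (1 - qcur 1) = qcur 1`.
-/

open Finset

lemma sum_Icc_one_eq_sum_range {M : Type*} [AddCommMonoid M] (n : ℕ) (f : ℕ → M) :
    ∑ d ∈ Icc 1 n, f d = ∑ e ∈ range n, f (e + 1) := by
  rw [← Ico_add_one_right_eq_Icc, sum_Ico_eq_sum_range, Nat.add_sub_cancel]
  simp only [add_comm 1]

lemma sum_Icc_choose_succ_mul {R : Type*} [Semiring R] (m : ℕ) (f : ℕ → R) :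
    ∑ d ∈ Icc 1 (m + 1), ((m + 1).choose d : R) * f d =
      f 1 + ∑ d ∈ Icc 1 m, (m.choose d : R) * (f d + f (d + 1)) := by
  simp only [sum_Icc_one_eq_sum_range, Nat.choose_succ_succ', Nat.cast_add, add_mul, mul_add,
    sum_add_distrib]
  rw [sum_range_succ' (fun e => (m.choose e : R) * f (e + 1)), sum_range_succ _ m]
  simp only [Nat.choose_succ_self, Nat.choose_zero_right, Nat.cast_zero, Nat.cast_one, zero_mul,
    one_mul, add_zero]
  abel

lemma sum_powerset_eq_sum_Icc_choose_mul {α R : Type*} [Semiring R] {s : Finset α}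
    {φ : Finset α → R} {g : ℕ → R} (h0 : φ ∅ = 0)
    (h : ∀ S ⊆ s, S.Nonempty → φ S = g S.card) :
    ∑ S ∈ s.powerset, φ S = ∑ d ∈ Icc 1 s.card, (s.card.choose d : R) * g d := by
  calc ∑ S ∈ s.powerset, φ S = ∑ S ∈ s.powerset, (if S.card = 0 then 0 else g S.card) := by
        refine sum_congr rfl fun S hS => ?_
        rcases S.eq_empty_or_nonempty with rfl | hne
        · simp [h0]
        · rw [if_neg (card_ne_zero.2 hne), h S (mem_powerset.1 hS) hne]
    _ = ∑ d ∈ Icc 1 s.card, (s.card.choose d : R) * g d := by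
        rw [sum_powerset_apply_card (fun d => if d = 0 then (0 : R) else g d), sum_range_succ',
          sum_Icc_one_eq_sum_range]
        simp [nsmul_eq_mul]

lemma card_mem_Icc_of_subset {S : Finset ℕ} {n : ℕ} (hne : S.Nonempty) (hS : S ⊆ Icc 1 n) :
    S.card ∈ Icc 1 n :=
  mem_Icc.2 ⟨card_pos.2 hne, by simpa using card_le_card hS⟩

lemma erase_subset_Icc_of_subset {S : Finset ℕ} {m : ℕ} (hS : S ⊆ Icc 1 (m + 1)) :
    S.erase (m + 1) ⊆ Icc 1 m := by
  rw [← subset_insert_iff]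
  intro x hx
  have := mem_Icc.1 (hS hx)
  simp only [mem_insert, mem_Icc]
  omega

lemma mul_ite_div_eq_of_le {K : Type*} [Field K] [LinearOrder K] [IsStrictOrderedRing K]
    {a b : K} (hb : 0 ≤ b) (hba : b ≤ a) : a * (if 0 < a then b / a else 0) = b := by
  split_ifs with ha
  · exact mul_div_cancel₀ b ha.ne'
  · rw [mul_zero]
    linarith [not_lt.1 ha]

lemma mul_skip_ratio_eq_and_mul_add_ratio_eq {m d : ℕ} {qprev qcur : ℕ → ℝ}
    (hqcur0 : ∀ d, 1 ≤ d → d ≤ m + 1 → 0 ≤ qcur d)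
    (hfeas : ∀ d, 1 ≤ d → d ≤ m → qprev d ≥ qcur d + qcur (d + 1)) (hd : d ∈ Icc 1 m) :
    qprev d * (if 0 < qprev d then qcur d / qprev d else 0) = qcur d ∧
      qprev d * (if 0 < qprev d then qcur (d + 1) / qprev d else 0) = qcur (d + 1) := by
  obtain ⟨h1, h2⟩ := mem_Icc.1 hd
  have hskip := hqcur0 d h1 (by omega)
  have hadd := hqcur0 (d + 1) (by omega) (by omega)
  have hsum := hfeas d h1 h2
  exact ⟨mul_ite_div_eq_of_le hskip (by linarith), mul_ite_div_eq_of_le hadd (by linarith)⟩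

lemma sum_choose_mul_sub_sub_succ {m : ℕ} {qprev qcur : ℕ → ℝ}
    (hprev : ∑ d ∈ Icc 1 m, (m.choose d : ℝ) * qprev d = 1)
    (hcur : ∑ d ∈ Icc 1 (m + 1), ((m + 1).choose d : ℝ) * qcur d = 1) :
    ∑ d ∈ Icc 1 m, (m.choose d : ℝ) * (qprev d - qcur d - qcur (d + 1)) = qcur 1 := by
  rw [sum_Icc_choose_succ_mul] at hcur
  simp only [sub_sub, mul_sub, sum_sub_distrib, hprev]
  linarith

lemma recipe_step_apply_eq {m : ℕ} {qprev qcur pA pS : ℕ → ℝ} {r : ℝ}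
    {ν ν' : Finset ℕ → ℝ}
    (hS : ∀ d ∈ Icc 1 m, qprev d * pS d = qcur d)
    (hA : ∀ d ∈ Icc 1 m, qprev d * pA d = qcur (d + 1))
    (hr : r = qcur 1)
    (hνq : ∀ S : Finset ℕ, S.Nonempty → S ⊆ Icc 1 m → ν S = qprev S.card)
    (hν' : ∀ S : Finset ℕ, S ⊆ Icc 1 (m + 1) → ν' S =
      if m + 1 ∉ S then ν S * pS S.card
      else if S ≠ ({m + 1} : Finset ℕ) then ν (S.erase (m + 1)) * pA (S.card - 1) else r)
    (S : Finset ℕ) (hne : S.Nonempty) (hsub : S ⊆ Icc 1 (m + 1)) : ν' S = qcur S.card := by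
  have hsub' := erase_subset_Icc_of_subset hsub
  rw [hν' S hsub]
  by_cases hmem : m + 1 ∈ S
  · rw [if_neg (not_not.2 hmem)]
    by_cases hsing : S = {m + 1}
    · rw [if_neg (not_not.2 hsing), hsing, card_singleton, hr]
    have hne' : (S.erase (m + 1)).Nonempty :=
      (erase_nonempty hmem).2 ((nontrivial_iff_ne_singleton hmem).2 hsing)
    have hcard := card_erase_of_mem hmem
    rw [if_pos hsing, hνq _ hne' hsub', hcard, hA _ (hcard ▸ card_mem_Icc_of_subset hne' hsub'),
      Nat.sub_add_cancel (card_pos.2 hne)]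
  · rw [erase_eq_of_notMem hmem] at hsub'
    rw [if_pos hmem, hνq S hne hsub', hS _ (card_mem_Icc_of_subset hne hsub')]

theorem recipe_apa_step_correct_general
    (i : ℕ) (hi : 2 ≤ i)
    (qprev qcur : ℕ → ℝ)
    (hqcur0 : ∀ d, 1 ≤ d → d ≤ i → 0 ≤ qcur d)
    (hqprevsum : ∑ d ∈ Finset.Icc 1 (i - 1), ((i - 1).choose d : ℝ) * qprev d = 1)
    (hqcursum : ∑ d ∈ Finset.Icc 1 i, (i.choose d : ℝ) * qcur d = 1)
    (hfeas : ∀ d, 1 ≤ d → d ≤ i - 1 → qprev d ≥ qcur d + qcur (d + 1))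
    (pA pS pR : ℕ → ℝ)
    (hpA : ∀ d, pA d = if 0 < qprev d then qcur (d + 1) / qprev d else 0)
    (hpS : ∀ d, pS d = if 0 < qprev d then qcur d / qprev d else 0)
    (hpR : ∀ d, pR d = 1 - pA d - pS d)
    (ν : Finset ℕ → ℝ)
    (hνsupp : ∀ S, ν S ≠ 0 → S.Nonempty ∧ S ⊆ Finset.Icc 1 (i - 1))
    (hνq : ∀ S : Finset ℕ, S.Nonempty → S ⊆ Finset.Icc 1 (i - 1) →
      ν S = qprev S.card)
    (ν' : Finset ℕ → ℝ)
    (hν' : ∀ S : Finset ℕ, S ⊆ Finset.Icc 1 i →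
      ν' S =
        if i ∉ S then ν S * pS S.card
        else if S ≠ ({i} : Finset ℕ) then ν (S.erase i) * pA (S.card - 1)
        else ∑ S' ∈ (Finset.Icc 1 (i - 1)).powerset, ν S' * pR S'.card) :
    (∀ S : Finset ℕ, S ⊆ Finset.Icc 1 i → 0 ≤ ν' S) ∧
    (∑ S ∈ (Finset.Icc 1 i).powerset, ν' S = 1) ∧
    (∀ S : Finset ℕ, S.Nonempty → S ⊆ Finset.Icc 1 i → ν' S = qcur S.card) := by
  obtain ⟨m, rfl⟩ : ∃ m, i = m + 1 := ⟨i - 1, by omega⟩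
  simp only [Nat.add_sub_cancel] at hqprevsum hfeas hνsupp hνq hν'
  have hν_empty : ν ∅ = 0 := by_contra fun h => not_nonempty_empty (hνsupp ∅ h).1
  have hS : ∀ d ∈ Icc 1 m, qprev d * pS d = qcur d := fun d hd =>
    hpS d ▸ (mul_skip_ratio_eq_and_mul_add_ratio_eq hqcur0 hfeas hd).1
  have hA : ∀ d ∈ Icc 1 m, qprev d * pA d = qcur (d + 1) := fun d hd =>
    hpA d ▸ (mul_skip_ratio_eq_and_mul_add_ratio_eq hqcur0 hfeas hd).2
  have hR : ∑ S ∈ (Icc 1 m).powerset, ν S * pR S.card = qcur 1 := by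
    rw [sum_powerset_eq_sum_Icc_choose_mul (g := fun d => qprev d - qcur d - qcur (d + 1))
      (by simp [hν_empty]) fun S hsub hne => ?_, Nat.card_Icc, Nat.add_sub_cancel]
    · exact sum_choose_mul_sub_sub_succ hqprevsum hqcursum
    · have hd := card_mem_Icc_of_subset hne hsub
      rw [hνq S hne hsub, hpR, ← hS _ hd, ← hA _ hd]
      ring
  have hval := recipe_step_apply_eq hS hA hR hνq hν'
  have hν'_empty : ν' ∅ = 0 := by simp [hν' ∅ (empty_subset _), hν_empty]
  refine ⟨fun S hsub => ?_, ?_, hval⟩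
  · rcases S.eq_empty_or_nonempty with rfl | hne
    · exact hν'_empty.ge
    · obtain ⟨h1, h2⟩ := mem_Icc.1 (card_mem_Icc_of_subset hne hsub)
      exact hval S hne hsub ▸ hqcur0 _ h1 h2
  · rw [sum_powerset_eq_sum_Icc_choose_mul hν'_empty fun S hsub hne => hval S hne hsub,
      Nat.card_Icc, Nat.add_sub_cancel]
    exact hqcursum

/-- Correctness of one step of the APA designation (Equation (2)):
starting from the uniform pmf `ν` with per-subset probabilities `qprev` on the nonempty
subsets of `{1,…,i-1}`, performing Skip / Add / Replace with the probabilities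
`pS, pA, pR` produces a pmf `ν'` with `ν' S = qcur |S|` for every nonempty
`S ⊆ {1,…,i}`. -/
theorem recipe_apa_step_correct
    (i : ℕ) (hi : 2 ≤ i)
    (qprev qcur : ℕ → ℝ)
    (hqprev0 : ∀ d, 1 ≤ d → d ≤ i - 1 → 0 ≤ qprev d)
    (hqcur0 : ∀ d, 1 ≤ d → d ≤ i → 0 ≤ qcur d)
    (hqprevsum : ∑ d ∈ Finset.Icc 1 (i - 1), ((i - 1).choose d : ℝ) * qprev d = 1)
    (hqcursum : ∑ d ∈ Finset.Icc 1 i, (i.choose d : ℝ) * qcur d = 1)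
    (hfeas : ∀ d, 1 ≤ d → d ≤ i - 1 → qprev d ≥ qcur d + qcur (d + 1))
    (pA pS pR : ℕ → ℝ)
    (hpA : ∀ d, pA d = if 0 < qprev d then qcur (d + 1) / qprev d else 0)
    (hpS : ∀ d, pS d = if 0 < qprev d then qcur d / qprev d else 0)
    (hpR : ∀ d, pR d = 1 - pA d - pS d)
    (ν : Finset ℕ → ℝ)
    (hν0 : ∀ S, 0 ≤ ν S)
    (hνsupp : ∀ S, ν S ≠ 0 → S.Nonempty ∧ S ⊆ Finset.Icc 1 (i - 1))
    (hνsum : ∑ S ∈ (Finset.Icc 1 (i - 1)).powerset, ν S = 1)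
    (hνq : ∀ S : Finset ℕ, S.Nonempty → S ⊆ Finset.Icc 1 (i - 1) →
      ν S = qprev S.card)
    (ν' : Finset ℕ → ℝ)
    (hν' : ∀ S : Finset ℕ, S ⊆ Finset.Icc 1 i →
      ν' S =
        if i ∉ S then ν S * pS S.card
        else if S ≠ ({i} : Finset ℕ) then ν (S.erase i) * pA (S.card - 1)
        else ∑ S' ∈ (Finset.Icc 1 (i - 1)).powerset, ν S' * pR S'.card) :
    (∀ S : Finset ℕ, S ⊆ Finset.Icc 1 i → 0 ≤ ν' S) ∧
    (∑ S ∈ (Finset.Icc 1 i).powerset, ν' S = 1) ∧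
    (∀ S : Finset ℕ, S.Nonempty → S ⊆ Finset.Icc 1 i → ν' S = qcur S.card) :=
  recipe_apa_step_correct_general i hi qprev qcur hqcur0 hqprevsum hqcursum hfeas pA pS pR hpA hpS
    hpR ν hνsupp hνq ν' hν'
end

section
/- Let K ≥ 2 and let μ(1), ..., μ(K−1) be nonnegative reals with Σ_{d=1}^{i−1} μ(d) ≤ 1 for every 2 ≤ i ≤ K. Define the invariant XDD sequence by μ_i(d) = μ(d) for 1 ≤ d ≤ i−1 and μ_i(i) = 1 − Σ_{d=1}^{i−1} μ(d), and set q_i(d) = μ_i(d)/C(i,d). Then the RECIPE-feasibility inequalities q_{i−1}(d) ≥ q_i(d) + q_i(d+1) hold for all 2 ≤ i ≤ K and 1 ≤ d ≤ i−1 if and only if d·μ(d) ≥ (d+1)·μ(d+1) for every 1 ≤ d ≤ K−2. -/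
/-!
With `C(n,d) (n+1) = C(n+1,d) (n+1-d)` and `C(n+1,d+1) (d+1) = C(n+1,d) (n+1-d)`, clearing the
common denominator `C(n+1,d) (n+1-d)` turns the interior inequality
`q_n(d) ≥ q_{n+1}(d) + q_{n+1}(d+1)` into `d μ(d) ≥ (d+1) μ(d+1)`, independently of `n`.
On the diagonal, `q_{n+1}(n+1) = q_n(n) - μ(n)`, so the inequality there only says
`μ(n) / (n+1) ≤ μ(n)`, which holds by nonnegativity.
-/

open Finset

theorem div_choose_add_div_choose_succ_le_iff {n d : ℕ} (hd : d ≤ n) (x y : ℝ) :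
    x / (n + 1).choose d + y / (n + 1).choose (d + 1) ≤ x / n.choose d ↔
      (d + 1) * y ≤ d * x := by
  have hc : (0 : ℝ) < (n + 1).choose d := by exact_mod_cast Nat.choose_pos (by omega)
  have hm : (0 : ℝ) < n + 1 - d := by
    have : (d : ℝ) ≤ n := by exact_mod_cast hd
    linarith
  have hm_cast : ((n + 1 - d : ℕ) : ℝ) = n + 1 - d := by
    push_cast [Nat.cast_sub (by omega : d ≤ n + 1)]
    ring
  have hpred : (n.choose d : ℝ) = (n + 1).choose d * (n + 1 - d) / (n + 1) := by
    rw [eq_div_iff (by positivity), ← hm_cast]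
    exact_mod_cast Nat.choose_mul_succ_eq n d
  have hsucc : ((n + 1).choose (d + 1) : ℝ) = (n + 1).choose d * (n + 1 - d) / (d + 1) := by
    rw [eq_div_iff (by positivity), ← hm_cast]
    exact_mod_cast Nat.choose_succ_right_eq (n + 1) d
  rw [hpred, hsucc, ← mul_le_mul_iff_of_pos_right (mul_pos hc hm)]
  field_simp
  constructor <;> intro h <;> linarith

theorem div_choose_add_one_sub_sum_Icc_succ_le {μ : ℕ → ℝ} {m : ℕ} (hμ : 0 ≤ μ (m + 1)) :
    μ (m + 1) / (m + 2).choose (m + 1) + (1 - ∑ d ∈ Icc 1 (m + 1), μ d) ≤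
      1 - ∑ d ∈ Icc 1 m, μ d := by
  have hshare : μ (m + 1) / (m + 2).choose (m + 1) ≤ μ (m + 1) :=
    div_le_self hμ (Nat.one_le_cast.2 (Nat.choose_pos (by omega)))
  rw [sum_Icc_succ_top (by omega)]
  linarith

theorem invariant_xdd_recipe_feasible_iff_general
    (K : ℕ) (μ : ℕ → ℝ)
    (hμ0 : ∀ d, 1 ≤ d → d ≤ K - 1 → 0 ≤ μ d)
    (μseq : ℕ → ℕ → ℝ)
    (hμseq1 : ∀ i d, 1 ≤ i → i ≤ K → 1 ≤ d → d ≤ i - 1 → μseq i d = μ d)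
    (hμseq2 : ∀ i, 1 ≤ i → i ≤ K →
      μseq i i = 1 - ∑ d ∈ Finset.Icc 1 (i - 1), μ d)
    (q : ℕ → ℕ → ℝ)
    (hq : ∀ i d, q i d = μseq i d / (i.choose d : ℝ)) :
    (∀ i d, 2 ≤ i → i ≤ K → 1 ≤ d → d ≤ i - 1 →
      q (i - 1) d ≥ q i d + q i (d + 1)) ↔
    (∀ d, 1 ≤ d → d ≤ K - 2 → (d : ℝ) * μ d ≥ ((d : ℝ) + 1) * μ (d + 1)) := by
  have interior : ∀ n d, 1 ≤ d → d < n → n + 1 ≤ K →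
      (q n d ≥ q (n + 1) d + q (n + 1) (d + 1) ↔ (d : ℝ) * μ d ≥ (d + 1) * μ (d + 1)) := by
    intro n d hd hdn hnK
    rw [hq, hq, hq, hμseq1 n d (by omega) (by omega) hd (by omega),
      hμseq1 (n + 1) d (by omega) hnK hd (by omega),
      hμseq1 (n + 1) (d + 1) (by omega) hnK (by omega) (by omega)]
    exact div_choose_add_div_choose_succ_le_iff hdn.le _ _
  have diagonal : ∀ n, 1 ≤ n → n + 1 ≤ K → q n n ≥ q (n + 1) n + q (n + 1) (n + 1) := by
    intro n hn hnK
    obtain ⟨m, rfl⟩ : ∃ m, n = m + 1 := ⟨n - 1, by omega⟩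
    rw [hq, hq, hq, hμseq2 (m + 1) hn (by omega), hμseq2 (m + 2) (by omega) hnK,
      hμseq1 (m + 2) (m + 1) (by omega) hnK hn (by omega)]
    simpa using div_choose_add_one_sub_sum_Icc_succ_le (hμ0 (m + 1) hn (by omega))
  constructor
  · intro h d hd hdK
    exact (interior (d + 1) d hd (by omega) (by omega)).1
      (h (d + 2) d (by omega) (by omega) hd (by omega))
  · intro h i d hi hiK hd hdi
    obtain ⟨n, rfl⟩ : ∃ n, i = n + 1 := ⟨i - 1, by omega⟩
    rw [Nat.add_sub_cancel]
    rcases (show d < n ∨ d = n by omega) with hdn | rfl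
    · exact (interior n d hd hdn hiK).2 (h d hd (by omega))
    · exact diagonal d hd hiK

/-- Theorem 4.2 of the paper. An invariant XDD sequence, determined by
the common masses `μ d` via `μseq i d = μ d` for `d ≤ i-1` and
`μseq i i = 1 - ∑_{d<i} μ d`, with per-subset probabilities `q i d = μseq i d / C(i,d)`,
is RECIPE-feasible iff `d·μ(d) ≥ (d+1)·μ(d+1)` for every `1 ≤ d ≤ K-2`. -/
theorem invariant_xdd_recipe_feasible_iff
    (K : ℕ) (hK : 2 ≤ K) (μ : ℕ → ℝ)
    (hμ0 : ∀ d, 1 ≤ d → d ≤ K - 1 → 0 ≤ μ d)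
    (hμsum : ∀ i, 2 ≤ i → i ≤ K → ∑ d ∈ Finset.Icc 1 (i - 1), μ d ≤ 1)
    (μseq : ℕ → ℕ → ℝ)
    (hμseq1 : ∀ i d, 1 ≤ i → i ≤ K → 1 ≤ d → d ≤ i - 1 → μseq i d = μ d)
    (hμseq2 : ∀ i, 1 ≤ i → i ≤ K →
      μseq i i = 1 - ∑ d ∈ Finset.Icc 1 (i - 1), μ d)
    (q : ℕ → ℕ → ℝ)
    (hq : ∀ i d, q i d = μseq i d / (i.choose d : ℝ)) :
    (∀ i d, 2 ≤ i → i ≤ K → 1 ≤ d → d ≤ i - 1 →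
      q (i - 1) d ≥ q i d + q i (d + 1)) ↔
    (∀ d, 1 ≤ d → d ≤ K - 2 → (d : ℝ) * μ d ≥ ((d : ℝ) + 1) * μ (d + 1)) :=
  invariant_xdd_recipe_feasible_iff_general K μ hμ0 μseq hμseq1 hμseq2 q hq
end

section
/- Let K ≥ 2 and define, for 1 ≤ k ≤ K, the Shifted Soliton distributions μ_k(d) = 1/(d(d+1)) for 1 ≤ d ≤ k−1 and μ_k(k) = 1/k, and set q_k(d) = μ_k(d)/C(k,d). Then for every 2 ≤ i ≤ K and 1 ≤ d ≤ i−1, the RECIPE-feasibility inequality q_{i−1}(d) ≥ q_i(d) + q_i(d+1) holds; hence the Shifted Soliton XDD sequence is RECIPE-feasible for every K. -/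
/-!
Write `i = n + 1`. For `d < n` none of the three degrees is the top one, so all three values of `μ`
are of the form `1/(d(d+1))`, and the identities
`C(n+1,d) = (n+1) C(n,d) / (n+1-d)`, `C(n+1,d+1) = (n+1) C(n,d) / (d+1)` turn the inequality
into `(n+1-d)/(d(d+1)) + 1/(d+2) ≤ (n+1)/(d(d+1))`, i.e. `1/(d+2) ≤ 1/(d+1)`.
For `d = n` it reads `1/(n(n+1)²) + 1/(n+1) ≤ 1/n`.
-/

section
variable {R : Type*} [Field R] [CharZero R]

lemma Nat.cast_choose_succ_inv {n d : ℕ} (hd : d ≤ n) :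
    ((n + 1).choose d : R)⁻¹ = (n + 1 - d) / ((n + 1) * n.choose d) := by
  have h := congrArg (Nat.cast : ℕ → R) (Nat.choose_mul_succ_eq n d)
  push_cast [Nat.cast_sub (by omega : d ≤ n + 1)] at h
  have hc : (n.choose d : R) ≠ 0 := by exact_mod_cast (Nat.choose_pos hd).ne'
  have hc' : ((n + 1).choose d : R) ≠ 0 := by exact_mod_cast (Nat.choose_pos (by omega)).ne'
  field_simp
  linear_combination h

lemma Nat.cast_choose_succ_succ_inv (n d : ℕ) :
    ((n + 1).choose (d + 1) : R)⁻¹ = (d + 1) / ((n + 1) * n.choose d) := by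
  have h : ((n + 1) * n.choose d : R) = (n + 1).choose (d + 1) * (d + 1) := by
    exact_mod_cast Nat.add_one_mul_choose_eq n d
  rw [h, div_mul_cancel_right₀ (Nat.cast_add_one_ne_zero d)]
end

lemma shiftedSoliton_recipe_ineq_of_lt {n d : ℕ} (hd : 0 < d) (hdn : d < n) :
    1 / ((d : ℝ) * (d + 1)) / (n + 1).choose d
      + 1 / ((d + 1 : ℝ) * (d + 1 + 1)) / (n + 1).choose (d + 1)
      ≤ 1 / ((d : ℝ) * (d + 1)) / n.choose d := by
  have hc : (0 : ℝ) < n.choose d := by exact_mod_cast Nat.choose_pos hdn.le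
  have hd' : (0 : ℝ) < d := by exact_mod_cast hd
  have hnd : (0 : ℝ) ≤ n + 1 - d := by
    have : (d : ℝ) < n := by exact_mod_cast hdn
    linarith
  calc _ = ((n + 1 - d) / ((d : ℝ) * (d + 1)) + 1 / (d + 2)) / ((n + 1) * n.choose d) := by
        simp only [div_eq_mul_inv _ ((n + 1).choose _ : ℝ), Nat.cast_choose_succ_inv hdn.le,
          Nat.cast_choose_succ_succ_inv]
        field_simp
        ring
    _ ≤ ((n + 1 - d) / ((d : ℝ) * (d + 1)) + 1 / (d + 1)) / ((n + 1) * n.choose d) := by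
        gcongr
        linarith
    _ = _ := by
        field_simp
        ring

lemma shiftedSoliton_recipe_ineq_self {n : ℕ} (hn : 0 < n) :
    1 / ((n : ℝ) * (n + 1)) / (n + 1).choose n + 1 / (n + 1 : ℝ) / (n + 1).choose (n + 1)
      ≤ 1 / (n : ℝ) / n.choose n := by
  have hn' : (0 : ℝ) < n := by exact_mod_cast hn
  rw [Nat.choose_succ_self_right, Nat.choose_self, Nat.choose_self]
  push_cast
  rw [div_one, div_one, div_div, div_add_div _ _ (by positivity) (by positivity),
    div_le_div_iff₀ (by positivity) (by positivity)]
  nlinarith [mul_pos hn' hn']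

theorem shifted_soliton_recipe_feasible_general
    (K : ℕ)
    (μ : ℕ → ℕ → ℝ)
    (hμ1 : ∀ k d, 1 ≤ k → k ≤ K → 1 ≤ d → d ≤ k - 1 →
      μ k d = 1 / ((d : ℝ) * ((d : ℝ) + 1)))
    (hμ2 : ∀ k, 1 ≤ k → k ≤ K → μ k k = 1 / (k : ℝ))
    (q : ℕ → ℕ → ℝ)
    (hq : ∀ k d, q k d = μ k d / ((k.choose d : ℕ) : ℝ)) :
    ∀ i d, 2 ≤ i → i ≤ K → 1 ≤ d → d ≤ i - 1 →
      q (i - 1) d ≥ q i d + q i (d + 1) := by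
  intro i d hi hiK hd hdi
  obtain ⟨n, rfl⟩ : ∃ n, i = n + 1 := ⟨i - 1, by omega⟩
  rw [Nat.add_sub_cancel] at hdi ⊢
  rw [ge_iff_le, hq, hq, hq]
  rcases hdi.lt_or_eq with hlt | rfl
  · rw [hμ1 n d (by omega) (by omega) hd (by omega), hμ1 (n + 1) d (by omega) hiK hd (by omega),
      hμ1 (n + 1) (d + 1) (by omega) hiK (by omega) (by omega)]
    push_cast
    exact shiftedSoliton_recipe_ineq_of_lt hd hlt
  · rw [hμ2 d hd (by omega), hμ1 (d + 1) d (by omega) hiK hd (by omega), hμ2 (d + 1) (by omega) hiK]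
    push_cast
    exact shiftedSoliton_recipe_ineq_self hd

/-- The Shifted Soliton XDD sequence
(`μ_k(d) = 1/(d(d+1))` for `1 ≤ d ≤ k-1`, `μ_k(k) = 1/k`, with per-subset
probabilities `q k d = μ_k(d)/C(k,d)`) satisfies the RECIPE-feasibility
inequalities for every `K`. -/
theorem shifted_soliton_recipe_feasible
    (K : ℕ) (hK : 2 ≤ K)
    (μ : ℕ → ℕ → ℝ)
    (hμ1 : ∀ k d, 1 ≤ k → k ≤ K → 1 ≤ d → d ≤ k - 1 →
      μ k d = 1 / ((d : ℝ) * ((d : ℝ) + 1)))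
    (hμ2 : ∀ k, 1 ≤ k → k ≤ K → μ k k = 1 / (k : ℝ))
    (q : ℕ → ℕ → ℝ)
    (hq : ∀ k d, q k d = μ k d / ((k.choose d : ℕ) : ℝ)) :
    ∀ i d, 2 ≤ i → i ≤ K → 1 ≤ d → d ≤ i - 1 →
      q (i - 1) d ≥ q i d + q i (d + 1) :=
  shifted_soliton_recipe_feasible_general K μ hμ1 hμ2 q hq
end
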